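/- arXiv:math/0102181 — 3 statements merged into one kernel-verified Lean document; each statement's English description precedes it below -/
import Mathlib

section
/- The polynomial f(z₀,z₁,z₂,z₃) = z₀¹⁶ + z₁⁵z₀ + z₂³z₀ + z₁z₂z₃ + z₃² has an isolated critical point at the origin: if (z₀,z₁,z₂,z₃) ∈ ℂ⁴ satisfies the four equations 16z₀¹⁵ + z₁⁵ + z₂³ = 0, 5z₁⁴z₀ + z₂z₃ = 0, 3z₂²z₀ + z₁z₃ = 0, and z₁z₂ + 2z₃ = 0 (the vanishing of all four partial derivatives of f), then z₀ = z₁ = z₂ = z₃ = 0. -/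
/-! The partial derivative in `z₃` expresses `z₃ = -z₁z₂/2`, after which the equations for `z₁`
and `z₂` become `z₁ (z₂² - 10 z₁³ z₀) = 0` and `z₂ (z₁² - 6 z₂ z₀) = 0`. If `z₁ z₂ ≠ 0`, these
force `z₂ = 60 z₁ z₀²`, hence `z₁ = 360 z₀³` and `z₂ = 21600 z₀⁵`: the point lies on the curve
of weights `(1, 3, 5)`, along which `∂f/∂z₀ = (16 + 360⁵ + 21600³) z₀¹⁵` vanishes only at `0`.
If `z₁ z₂ = 0`, the remaining equations are a monomial `zᵢᵐ z₀ = 0` and a binomial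
`zᵢᵏ + 16 z₀¹⁵ = 0`, whose only common zero is the origin. -/

theorem eq_zero_of_pow_mul_eq_zero_of_pow_add_mul_pow_eq_zero {R : Type*} [Semiring R]
    [NoZeroDivisors R] {x y a : R} {m k n : ℕ} (ha : a ≠ 0) (hk : k ≠ 0) (hn : n ≠ 0)
    (hxy : x ^ m * y = 0) (h : x ^ k + a * y ^ n = 0) : x = 0 ∧ y = 0 := by
  rcases mul_eq_zero.mp hxy with hx | rfl
  · obtain rfl := eq_zero_of_pow_eq_zero hx
    rw [zero_pow hk, zero_add, mul_eq_zero] at h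
    exact ⟨rfl, eq_zero_of_pow_eq_zero (h.resolve_left ha)⟩
  · rw [zero_pow hn, mul_zero, add_zero] at h
    exact ⟨eq_zero_of_pow_eq_zero h, rfl⟩

theorem mul_eq_zero_of_partialDerivs_eq_zero {K : Type*} [Field K] [CharZero K] {z₀ z₁ z₂ z₃ : K}
    (h0 : 16 * z₀ ^ 15 + z₁ ^ 5 + z₂ ^ 3 = 0)
    (h1 : 5 * z₁ ^ 4 * z₀ + z₂ * z₃ = 0)
    (h2 : 3 * z₂ ^ 2 * z₀ + z₁ * z₃ = 0)
    (h3 : z₁ * z₂ + 2 * z₃ = 0) :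
    z₁ * z₂ = 0 := by
  by_contra hz
  obtain ⟨hz₁, hz₂⟩ := mul_ne_zero_iff.mp hz
  have e₁ : z₂ ^ 2 = 10 * z₁ ^ 3 * z₀ :=
    mul_left_cancel₀ hz₁ (by linear_combination z₂ * h3 - 2 * h1)
  have e₂ : z₁ ^ 2 = 6 * z₂ * z₀ :=
    mul_left_cancel₀ hz₂ (by linear_combination z₁ * h3 - 2 * h2)
  have e₃ : z₂ = 60 * z₁ * z₀ ^ 2 :=
    mul_left_cancel₀ hz₂ (by linear_combination e₁ + 10 * z₁ * z₀ * e₂)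
  have e₄ : z₁ = 360 * z₀ ^ 3 :=
    mul_left_cancel₀ hz₁ (by linear_combination e₂ + 6 * z₀ * e₃)
  have e₅ : z₂ = 21600 * z₀ ^ 5 := by rw [e₃, e₄]; ring
  have hc : (16 + 360 ^ 5 + 21600 ^ 3 : K) * z₀ ^ 15 = 0 := by
    rw [e₄, e₅] at h0; linear_combination h0
  have hz₀ : z₀ = 0 :=
    eq_zero_of_pow_eq_zero ((mul_eq_zero.mp hc).resolve_left (by norm_num))
  exact hz₁ (by rw [e₄, hz₀]; ring)

/-- The polynomial `f(z₀,z₁,z₂,z₃) = z₀¹⁶ + z₁⁵z₀ + z₂³z₀ + z₁z₂z₃ + z₃²` has an isolated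
critical point at the origin: the only common zero of its four partial derivatives is `0`. -/
theorem stmt1 (z₀ z₁ z₂ z₃ : ℂ)
    (h0 : 16 * z₀ ^ 15 + z₁ ^ 5 + z₂ ^ 3 = 0)
    (h1 : 5 * z₁ ^ 4 * z₀ + z₂ * z₃ = 0)
    (h2 : 3 * z₂ ^ 2 * z₀ + z₁ * z₃ = 0)
    (h3 : z₁ * z₂ + 2 * z₃ = 0) :
    z₀ = 0 ∧ z₁ = 0 ∧ z₂ = 0 ∧ z₃ = 0 := by
  rcases mul_eq_zero.mp (mul_eq_zero_of_partialDerivs_eq_zero h0 h1 h2 h3) with rfl | rfl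
  · obtain ⟨rfl, rfl⟩ := eq_zero_of_pow_mul_eq_zero_of_pow_add_mul_pow_eq_zero
      (x := z₂) (y := z₀) (a := 16) (m := 2) (k := 3) (n := 15)
      (by norm_num) (by norm_num) (by norm_num)
      (by linear_combination h2 / 3) (by linear_combination h0)
    exact ⟨rfl, rfl, rfl, by linear_combination h3 / 2⟩
  · obtain ⟨rfl, rfl⟩ := eq_zero_of_pow_mul_eq_zero_of_pow_add_mul_pow_eq_zero
      (x := z₁) (y := z₀) (a := 16) (m := 4) (k := 5) (n := 15)
      (by norm_num) (by norm_num) (by norm_num)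
      (by linear_combination h1 / 5) (by linear_combination h0)
    exact ⟨rfl, rfl, rfl, by linear_combination h3 / 2⟩
end

section
/- Let Λₙ denote the element Σ_{ζ : ζⁿ = 1} [ζ] of the monoid algebra ℚ[ℂ] (the sum over all n-th roots of unity ζ ∈ ℂ of the basis element indexed by ζ, where ℂ carries its multiplicative monoid structure). Then for all positive integers a and b, Λₐ · Λ_b = gcd(a,b) · Λ_{lcm(a,b)}. -/
open scoped BigOperators

/-- `Λₙ = Σ_{ζⁿ = 1} [ζ]` in the monoid algebra `ℚ[ℂ]` of the multiplicative
monoid of `ℂ`: the sum over all `n`-th roots of unity of the corresponding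
basis element. -/
noncomputable def Lam (n : ℕ) : MonoidAlgebra ℚ ℂ :=
  ∑ ζ ∈ Polynomial.nthRootsFinset n (1 : ℂ), MonoidAlgebra.single ζ (1 : ℚ)

/-!
Expanding the product, `Λₐ Λ_b = Σ_η N(η) [η]`, where `N(η)` counts the pairs `(ζ, ξ)` of an
`a`-th and a `b`-th root of unity with `ζ ξ = η`. Such a product is an `lcm(a,b)`-th root of
unity, and every `lcm(a,b)`-th root arises, since a primitive one is a product of powers of
primitive `a`-th and `b`-th roots. Each fibre is then a translate of the antidiagonal copy
`ζ ↦ (ζ, ζ⁻¹)` of the `gcd(a,b)`-th roots of unity, so `N(η) = gcd(a,b)`.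
-/

open Finset Polynomial

theorem MonoidAlgebra.sum_single_mul_sum_single_of_card_fiber {k M : Type*} [Semiring k]
    [Monoid M] [DecidableEq M] {s t u : Finset M} {c : ℕ} (hmaps : ∀ x ∈ s, ∀ y ∈ t, x * y ∈ u)
    (hfiber : ∀ z ∈ u, #{p ∈ s ×ˢ t | p.1 * p.2 = z} = c) :
    (∑ x ∈ s, single x (1 : k)) * ∑ y ∈ t, single y (1 : k) =
      (c : k) • ∑ z ∈ u, single z (1 : k) := by
  rw [sum_mul_sum, ← sum_product', ← sum_fiberwise_of_maps_to (g := fun p => p.1 * p.2)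
    (fun p hp => hmaps _ (mem_product.1 hp).1 _ (mem_product.1 hp).2), smul_sum]
  refine sum_congr rfl fun z hz => ?_
  rw [sum_congr rfl fun p hp => by rw [single_mul_single, one_mul, (mem_filter.1 hp).2],
    sum_const, hfiber z hz, Nat.cast_smul_eq_nsmul]

theorem IsPrimitiveRoot.exists_mul_eq_of_pow_lcm_eq_one {R : Type*} [CommRing R] [IsDomain R]
    {ζ ξ η : R} {a b : ℕ} (hζ : IsPrimitiveRoot ζ a) (hξ : IsPrimitiveRoot ξ b) (ha : a ≠ 0)
    (hb : b ≠ 0) (hη : η ^ a.lcm b = 1) : ∃ x y : R, x ^ a = 1 ∧ y ^ b = 1 ∧ x * y = η := by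
  have : NeZero (a.lcm b) := ⟨Nat.lcm_ne_zero ha hb⟩
  obtain ⟨k, -, rfl⟩ := (hζ.pow_mul_pow_lcm hξ ha hb).eq_pow_of_pow_eq_one hη
  refine ⟨(ζ ^ _) ^ k, (ξ ^ _) ^ k, ?_, ?_, (mul_pow _ _ _).symm⟩
  · rw [pow_right_comm, pow_right_comm ζ, hζ.pow_eq_one, one_pow, one_pow]
  · rw [pow_right_comm, pow_right_comm ξ, hξ.pow_eq_one, one_pow, one_pow]

theorem nthRootsFinset_one_subset_of_dvd {R : Type*} [CommRing R] [IsDomain R] {m n : ℕ}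
    (hn : 0 < n) (h : m ∣ n) : nthRootsFinset m (1 : R) ⊆ nthRootsFinset n (1 : R) := by
  intro x hx
  rw [mem_nthRootsFinset (Nat.pos_of_dvd_of_pos h hn)] at hx
  obtain ⟨c, rfl⟩ := h
  rw [mem_nthRootsFinset hn, pow_mul, hx, one_pow]

theorem card_mul_fiber_nthRootsFinset_eq_card_gcd {K : Type*} [Field K] [DecidableEq K]
    {a b : ℕ} (ha : 0 < a) (hb : 0 < b) {ζ ξ : K} (hζ : ζ ^ a = 1) (hξ : ξ ^ b = 1) :
    #{p ∈ nthRootsFinset a (1 : K) ×ˢ nthRootsFinset b (1 : K) | p.1 * p.2 = ζ * ξ} =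
      #(nthRootsFinset (a.gcd b) (1 : K)) := by
  have hg : 0 < a.gcd b := Nat.gcd_pos_of_pos_left b ha
  have hζ0 : ζ ≠ 0 := ne_zero_pow ha.ne' (by simp [hζ])
  have hξ0 : ξ ≠ 0 := ne_zero_pow hb.ne' (by simp [hξ])
  refine card_bij' (fun p _ => p.1 / ζ) (fun x _ => (x * ζ, ξ / x)) ?_ ?_ ?_ ?_ <;>
    simp only [mem_filter, mem_product, mem_nthRootsFinset ha, mem_nthRootsFinset hb,
      mem_nthRootsFinset hg, pow_gcd_eq_one]
  · rintro ⟨z, w⟩ ⟨⟨hz, hw⟩, hzw⟩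
    have hw0 : w ≠ 0 := ne_zero_pow hb.ne' (by simp [hw])
    have : z / ζ = ξ / w := by field_simp; linear_combination hzw
    exact ⟨by rw [div_pow, hz, hζ, div_one], by rw [this, div_pow, hξ, hw, div_one]⟩
  · rintro x ⟨hxa, hxb⟩
    have hx0 : x ≠ 0 := ne_zero_pow ha.ne' (by simp [hxa])
    refine ⟨⟨by rw [mul_pow, hxa, hζ, one_mul], by rw [div_pow, hξ, hxb, div_one]⟩, ?_⟩
    field_simp
  · rintro ⟨z, w⟩ ⟨⟨hz, hw⟩, hzw⟩
    have hz0 : z ≠ 0 := ne_zero_pow ha.ne' (by simp [hz])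
    ext
    · exact div_mul_cancel₀ z hζ0
    · field_simp; linear_combination -hzw
  · intro x _
    exact mul_div_cancel_right₀ x hζ0

/-- The Milnor–Orlik multiplication rule `Λₐ · Λ_b = gcd(a,b) · Λ_{lcm(a,b)}`
in the monoid algebra `ℚ[ℂ]`. -/
theorem stmt6 (a b : ℕ) (ha : 0 < a) (hb : 0 < b) :
    Lam a * Lam b = (Nat.gcd a b : ℚ) • Lam (Nat.lcm a b) := by
  classical
  have hl : 0 < a.lcm b := Nat.lcm_pos ha hb
  refine MonoidAlgebra.sum_single_mul_sum_single_of_card_fiber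
    (fun x hx y hy => ?_) fun η hη => ?_
  · simpa only [mul_one] using mul_mem_nthRootsFinset
      (nthRootsFinset_one_subset_of_dvd hl (Nat.dvd_lcm_left a b) hx)
      (nthRootsFinset_one_subset_of_dvd hl (Nat.dvd_lcm_right a b) hy)
  · obtain ⟨ζ, ξ, hζ, hξ, rfl⟩ :=
      (Complex.isPrimitiveRoot_exp a ha.ne').exists_mul_eq_of_pow_lcm_eq_one
        (Complex.isPrimitiveRoot_exp b hb.ne') ha.ne' hb.ne' ((mem_nthRootsFinset hl 1).1 hη)
    rw [card_mul_fiber_nthRootsFinset_eq_card_gcd ha hb hζ hξ,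
      (Complex.isPrimitiveRoot_exp _ (Nat.gcd_pos_of_pos_left b ha).ne').card_nthRootsFinset]
end

section
/- Let Λₙ = Σ_{ζ : ζⁿ = 1} [ζ] in the monoid algebra ℚ[ℂ] (ℂ with its multiplicative monoid structure). Then ((1/5)·Λ₁₆ − 1) · ((1/3)·Λ₁₆ − 1) · (Λ₁₆ − 1) · (Λ₂ − 1) = 9·Λ₁₆ − Λ₂ + 1, where 1 denotes the identity element [1] of the algebra. -/
open scoped BigOperators

/-! Translation by a root of unity `η` with `η ^ n = 1` permutes the `n`-th roots of unity, so
`Λₙ · [η] = Λₙ`; summing over the `m`-th roots for `m ∣ n` gives `Λₙ Λₘ = m Λₙ`. In particular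
`Λ₁₆² = 16 Λ₁₆` and `Λ₁₆ Λ₂ = 2 Λ₁₆`, and these two relations alone reduce the product to
`9 Λ₁₆ − Λ₂ + 1`. -/

theorem product_eq_of_mul_self_eq_smul {R : Type*} [Ring R] [Algebra ℚ R] {A B : R}
    (hAA : A * A = (16 : ℚ) • A) (hAB : A * B = (2 : ℚ) • A) :
    ((1 / 5 : ℚ) • A - 1) * ((1 / 3 : ℚ) • A - 1) * (A - 1) * (B - 1)
      = (9 : ℚ) • A - B + 1 := by
  simp only [sub_mul, mul_sub, smul_mul_assoc, mul_smul_comm, smul_smul, hAA, hAB, one_mul, mul_one,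
    smul_sub, mul_assoc]
  module

theorem Lam_mul_single {n : ℕ} (hn : n ≠ 0) {η : ℂ} (hη : η ^ n = 1) :
    Lam n * MonoidAlgebra.single η 1 = Lam n := by
  have hη0 : η ≠ 0 := by rintro rfl; simp [zero_pow hn] at hη
  unfold Lam
  rw [Finset.sum_mul]
  refine Finset.sum_nbij' (· * η) (· * η⁻¹) ?_ ?_ ?_ ?_ ?_ <;>
    simp_all [Polynomial.mem_nthRootsFinset (Nat.pos_of_ne_zero hn), mul_pow,
      MonoidAlgebra.single_mul_single]

theorem Lam_mul_Lam_of_dvd {m n : ℕ} (hn : n ≠ 0) (hmn : m ∣ n) :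
    Lam n * Lam m = (m : ℚ) • Lam n := by
  have hm : m ≠ 0 := ne_zero_of_dvd_ne_zero hn hmn
  calc Lam n * Lam m
      = ∑ η ∈ Polynomial.nthRootsFinset m (1 : ℂ), Lam n * MonoidAlgebra.single η 1 :=
        Finset.mul_sum _ _ _
    _ = ∑ η ∈ Polynomial.nthRootsFinset m (1 : ℂ), Lam n := by
        refine Finset.sum_congr rfl fun η hη => Lam_mul_single hn ?_
        obtain ⟨k, rfl⟩ := hmn
        rw [pow_mul, (Polynomial.mem_nthRootsFinset (Nat.pos_of_ne_zero hm) 1).mp hη, one_pow]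
    _ = (m : ℚ) • Lam n := by
        rw [Finset.sum_const, (Complex.isPrimitiveRoot_exp m hm).card_nthRootsFinset,
          Nat.cast_smul_eq_nsmul]

/-- The Milnor–Orlik computation of the divisor of the characteristic polynomial of
the monodromy of `L₁₆`:
`(Λ₁₆/5 − 1)(Λ₁₆/3 − 1)(Λ₁₆ − 1)(Λ₂ − 1) = 9Λ₁₆ − Λ₂ + 1` in `ℚ[ℂ]`. -/
theorem stmt7 :
    ((1 / 5 : ℚ) • Lam 16 - 1) * ((1 / 3 : ℚ) • Lam 16 - 1) * (Lam 16 - 1) * (Lam 2 - 1)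
      = (9 : ℚ) • Lam 16 - Lam 2 + 1 :=
  product_eq_of_mul_self_eq_smul (by exact_mod_cast Lam_mul_Lam_of_dvd (by norm_num) dvd_rfl)
    (by exact_mod_cast Lam_mul_Lam_of_dvd (by norm_num) (by norm_num))
end
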